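/- Fix h ∈ ℝ. For q ∈ ℝ with q ∉ {0,1}, let g(q) be the 2×2 matrix [[1, h/(q−1)],[0,1]] and set R_{h,q} = (g(q) ⊗ g(q))⁻¹ R_q (g(q) ⊗ g(q)), where ⊗ denotes the Kronecker product. Then, as q → 1 (through values q ≠ 0,1), the matrix (1/2) R_{h,q} tends (entrywise) to the matrix R_h = [[1,−h,h,h²],[0,1,0,−h],[0,0,1,h],[0,0,0,1]]. -/

import Mathlib

open Kronecker Topology Filter

/-- Index map `(i,j) ∈ {1,2}×{1,2}` (0-based) to `Fin 4`, row-major: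
`(1,1),(1,2),(2,1),(2,2)`. -/
def pairIdx : Fin 2 × Fin 2 → Fin 4 := fun p => ⟨2 * p.1.1 + p.2.1, by omega⟩

/-- The 4×4 matrix
`R_q = [[q+q⁻¹,0,0,0],[0,2,q⁻¹−q,0],[0,q−q⁻¹,2,0],[0,0,0,q+q⁻¹]]` over `ℝ`. -/
noncomputable def Rq (q : ℝ) : Matrix (Fin 2 × Fin 2) (Fin 2 × Fin 2) ℝ :=
  Matrix.of fun p r =>
    (!![q + q⁻¹, 0,       0,       0;
        0,       2,       q⁻¹ - q, 0;
        0,       q - q⁻¹, 2,       0;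
        0,       0,       0,       q + q⁻¹] : Matrix (Fin 4) (Fin 4) ℝ)
      (pairIdx p) (pairIdx r)

/-- The 4×4 matrix `R_h = [[1,−h,h,h²],[0,1,0,−h],[0,0,1,h],[0,0,0,1]]`. -/
def Rh (h : ℝ) : Matrix (Fin 2 × Fin 2) (Fin 2 × Fin 2) ℝ :=
  Matrix.of fun p q =>
    (!![1, -h, h, h^2;
        0,  1, 0, -h;
        0,  0, 1, h;
        0,  0, 0, 1] : Matrix (Fin 4) (Fin 4) ℝ) (pairIdx p) (pairIdx q)

/-- The change-of-basis matrix `g(q) = [[1, h/(q−1)],[0,1]]`. -/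
noncomputable def g (h q : ℝ) : Matrix (Fin 2) (Fin 2) ℝ := !![1, h / (q - 1); 0, 1]

/-- `R_{h,q} = (g(q) ⊗ g(q))⁻¹ R_q (g(q) ⊗ g(q))`. -/
noncomputable def Rhq (h q : ℝ) : Matrix (Fin 2 × Fin 2) (Fin 2 × Fin 2) ℝ :=
  (g h q ⊗ₖ g h q)⁻¹ * Rq q * (g h q ⊗ₖ g h q)

lemma g_neg_mul_g (h q : ℝ) : g (-h) q * g h q = 1 := by
  simp [g, Matrix.one_fin_two, neg_div]

lemma inv_g (h q : ℝ) : (g h q)⁻¹ = g (-h) q :=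
  Matrix.inv_eq_left_inv (g_neg_mul_g h q)

lemma Rhq_eq (h q : ℝ) : Rhq h q = (g (-h) q ⊗ₖ g (-h) q) * Rq q * (g h q ⊗ₖ g h q) := by
  rw [Rhq, Matrix.inv_kronecker, inv_g]

/-- The entries of `(1/2) R_{h,q}` after cancelling the pole at `q = 1`: the `h²` entry comes from
`(q + q⁻¹ - 2) / (q - 1)² = q⁻¹`. -/
noncomputable def halfRhqReduced (h q : ℝ) : Matrix (Fin 2 × Fin 2) (Fin 2 × Fin 2) ℝ :=
  Matrix.of fun p r =>
    (!![(q + q⁻¹) / 2, -h / q,        h,             h ^ 2 / q;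
        0,             1,             (q⁻¹ - q) / 2, -h;
        0,             (q - q⁻¹) / 2, 1,             h / q;
        0,             0,             0,             (q + q⁻¹) / 2] :
      Matrix (Fin 4) (Fin 4) ℝ) (pairIdx p) (pairIdx r)

lemma half_smul_Rhq_eq_halfRhqReduced (h : ℝ) {q : ℝ} (hq0 : q ≠ 0) (hq1 : q ≠ 1) :
    (1 / 2 : ℝ) • Rhq h q = halfRhqReduced h q := by
  have hq1' : q - 1 ≠ 0 := sub_ne_zero.mpr hq1
  rw [Rhq_eq]
  ext ⟨i, j⟩ ⟨k, l⟩
  fin_cases i <;> fin_cases j <;> fin_cases k <;> fin_cases l <;>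
    simp [Matrix.mul_apply, Fintype.sum_prod_type, g, Rq, halfRhqReduced, pairIdx]
  all_goals field_simp
  all_goals ring

lemma continuousAt_halfRhqReduced (h : ℝ) {q : ℝ} (hq : q ≠ 0) :
    ContinuousAt (halfRhqReduced h) q := by
  refine continuousAt_pi.2 fun p => continuousAt_pi.2 fun r => ?_
  rcases p with ⟨i, j⟩
  rcases r with ⟨k, l⟩
  fin_cases i <;> fin_cases j <;> fin_cases k <;> fin_cases l <;>
    · simp [halfRhqReduced, pairIdx]
      fun_prop (disch := exact hq)

lemma halfRhqReduced_one (h : ℝ) : halfRhqReduced h 1 = Rh h := by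
  ext ⟨i, j⟩ ⟨k, l⟩
  fin_cases i <;> fin_cases j <;> fin_cases k <;> fin_cases l <;>
    simp [halfRhqReduced, Rh, pairIdx]

/-- As `q → 1` through values `q ∉ {0,1}`, the matrix `(1/2) R_{h,q}` tends
entrywise to `R_h`. -/
theorem tendsto_half_Rhq (h : ℝ) :
    Tendsto (fun q : ℝ => (1 / 2 : ℝ) • Rhq h q)
      (𝓝[({0, 1} : Set ℝ)ᶜ] (1 : ℝ)) (𝓝 (Rh h)) := by
  have hEq : ∀ q ∈ ({0, 1} : Set ℝ)ᶜ, halfRhqReduced h q = (1 / 2 : ℝ) • Rhq h q := by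
    intro q hq
    simp only [Set.mem_compl_iff, Set.mem_insert_iff, Set.mem_singleton_iff, not_or] at hq
    exact (half_smul_Rhq_eq_halfRhqReduced h hq.1 hq.2).symm
  rw [← halfRhqReduced_one]
  exact ((continuousAt_halfRhqReduced h one_ne_zero).tendsto.mono_left nhdsWithin_le_nhds).congr'
    (eventually_nhdsWithin_of_forall hEq)
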